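/- Let k ≥ 1 and n ≥ 0 be integers and let s be a complex number with σ = Re s > 1. Then k^n · |c_{n,k}(s)| / n! ≤ (∏_{j=0}^{n−1}(|s|+j) / n!) · Σ_{m≥k} m^{−σ}, where |s| is the complex absolute value of s, |c_{n,k}(s)| is the complex absolute value of c_{n,k}(s), and Σ_{m≥k} m^{−σ} = Σ'_{m∈ℕ} ((m+k):ℝ)^{−σ} (real powers via Real.rpow). -/

import Mathlib

noncomputable def zetaK (k : ℕ) (s : ℂ) : ℂ :=
  riemannZeta s - ∑ m ∈ Finset.Ico 1 k, (m : ℂ) ^ (-s)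

noncomputable def c (n k : ℕ) (s : ℂ) : ℂ :=
  (∏ j ∈ Finset.range n, (s + j)) * zetaK k (s + n)

/-! For `Re w > 1`, `ζ_k(w)` is the tail `∑_{m ≥ k} m^{-w}` of the Dirichlet series, so
`‖ζ_k(s + n)‖ ≤ ∑_{m ≥ 0} (m + k)^{-(σ + n)}`. Each term times `k^n` is at most `(m + k)^{-σ}`,
and `‖s + j‖ ≤ ‖s‖ + j` bounds the product factor of `c_{n,k}(s)`. -/

open Finset

lemma zetaK_eq_tsum (k : ℕ) {w : ℂ} (hw : 1 < w.re) :
    zetaK k w = ∑' m : ℕ, ((m + k : ℕ) : ℂ) ^ (-w) := by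
  have hsum : Summable fun m : ℕ => (m : ℂ) ^ (-w) := by
    simpa only [one_div, ← Complex.cpow_neg] using Complex.summable_one_div_nat_cpow.mpr hw
  have hzero : ((0 : ℕ) : ℂ) ^ (-w) = 0 := by
    simpa using Complex.zero_cpow (neg_ne_zero.mpr (Complex.ne_zero_of_one_lt_re hw))
  have hhead : ∑ m ∈ Ico 1 k, (m : ℂ) ^ (-w) = ∑ m ∈ range k, (m : ℂ) ^ (-w) := by
    rw [range_eq_Ico]
    exact sum_subset (Ico_subset_Ico_left zero_le_one) fun m hm hm' => by
      obtain rfl : m = 0 := by simp only [mem_Ico] at hm hm'; omega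
      exact hzero
  rw [zetaK, zeta_eq_tsum_one_div_nat_cpow hw]
  simp only [one_div, ← Complex.cpow_neg]
  rw [hhead, ← hsum.sum_add_tsum_nat_add k, add_sub_cancel_left]

lemma summable_nat_add_rpow_neg (k : ℕ) {σ : ℝ} (hσ : 1 < σ) :
    Summable fun m : ℕ => ((m : ℝ) + k) ^ (-σ) := by
  have := (summable_nat_add_iff k).mpr (Real.summable_nat_rpow.mpr (neg_lt_neg hσ))
  simpa only [Nat.cast_add] using this

lemma norm_zetaK_le (k : ℕ) {w : ℂ} (hw : 1 < w.re) :
    ‖zetaK k w‖ ≤ ∑' m : ℕ, ((m : ℝ) + k) ^ (-w.re) := by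
  have hre : (-w).re ≠ 0 := by
    rw [Complex.neg_re, neg_ne_zero]
    exact (zero_lt_one.trans hw).ne'
  have hnorm : ∀ m : ℕ, ‖((m + k : ℕ) : ℂ) ^ (-w)‖ = ((m : ℝ) + k) ^ (-w.re) := fun m => by
    rw [Complex.norm_natCast_cpow_of_re_ne_zero _ hre, Nat.cast_add, Complex.neg_re]
  rw [zetaK_eq_tsum k hw]
  refine (norm_tsum_le_tsum_norm ?_).trans_eq (tsum_congr hnorm)
  simpa only [hnorm] using summable_nat_add_rpow_neg k hw

lemma pow_mul_rpow_neg_add_le {a x σ : ℝ} (n : ℕ) (ha : 0 ≤ a) (hax : a ≤ x) (hσ : 0 < σ) :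
    a ^ n * x ^ (-(σ + n)) ≤ x ^ (-σ) := by
  have hx : 0 ≤ x := ha.trans hax
  have hsplit : x ^ (-(σ + n)) = x ^ (-σ) * (x ^ n)⁻¹ := by
    have hne : -σ + -(n : ℝ) ≠ 0 := by linarith [n.cast_nonneg (α := ℝ)]
    rw [neg_add, Real.rpow_add' hx hne, Real.rpow_neg hx (n : ℝ), Real.rpow_natCast]
  have hratio : a ^ n * (x ^ n)⁻¹ ≤ 1 := div_le_one_of_le₀ (by gcongr) (by positivity)
  calc a ^ n * x ^ (-(σ + n)) = a ^ n * (x ^ n)⁻¹ * x ^ (-σ) := by rw [hsplit]; ring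
    _ ≤ x ^ (-σ) := mul_le_of_le_one_left (by positivity) hratio

lemma pow_mul_tsum_rpow_neg_add_le (k n : ℕ) {σ : ℝ} (hσ : 1 < σ) :
    (k : ℝ) ^ n * ∑' m : ℕ, ((m : ℝ) + k) ^ (-(σ + n)) ≤ ∑' m : ℕ, ((m : ℝ) + k) ^ (-σ) := by
  have hσn : 1 < σ + n := by linarith [n.cast_nonneg (α := ℝ)]
  rw [← tsum_mul_left]
  exact ((summable_nat_add_rpow_neg k hσn).mul_left _).tsum_le_tsum
    (fun m => pow_mul_rpow_neg_add_le n k.cast_nonneg (le_add_of_nonneg_left m.cast_nonneg)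
      (by linarith))
    (summable_nat_add_rpow_neg k hσ)

lemma norm_prod_add_natCast_le (s : ℂ) (n : ℕ) :
    ‖∏ j ∈ range n, (s + j)‖ ≤ ∏ j ∈ range n, (‖s‖ + j) := by
  rw [norm_prod]
  gcongr with j
  exact (norm_add_le _ _).trans_eq (by rw [Complex.norm_natCast])

lemma pow_mul_norm_c_le (k n : ℕ) {s : ℂ} (hs : 1 < s.re) :
    (k : ℝ) ^ n * ‖c n k s‖ ≤
      (∏ j ∈ range n, (‖s‖ + j)) * ∑' m : ℕ, ((m : ℝ) + k) ^ (-s.re) := by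
  have hw : 1 < (s + n).re := by
    simp only [Complex.add_re, Complex.natCast_re]
    linarith [n.cast_nonneg (α := ℝ)]
  have hzeta : (k : ℝ) ^ n * ‖zetaK k (s + n)‖ ≤ ∑' m : ℕ, ((m : ℝ) + k) ^ (-s.re) := by
    refine (mul_le_mul_of_nonneg_left (norm_zetaK_le k hw) (by positivity)).trans ?_
    simpa only [Complex.add_re, Complex.natCast_re] using pow_mul_tsum_rpow_neg_add_le k n hs
  rw [c, norm_mul, mul_left_comm]
  exact mul_le_mul (norm_prod_add_natCast_le s n) hzeta (by positivity)
    (prod_nonneg fun j _ => by positivity)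

theorem stmt_2_general (k : ℕ) (n : ℕ) (s : ℂ) (hs : 1 < s.re) :
    (k : ℝ) ^ n * ‖c n k s‖ / (n.factorial : ℝ)
      ≤ (∏ j ∈ Finset.range n, (‖s‖ + j)) / (n.factorial : ℝ) *
        ∑' m : ℕ, ((m : ℝ) + k) ^ (-s.re) := by
  rw [div_mul_eq_mul_div]
  exact div_le_div_of_nonneg_right (pow_mul_norm_c_le k n hs) (by positivity)

theorem stmt_2 (k : ℕ) (hk : 1 ≤ k) (n : ℕ) (s : ℂ) (hs : 1 < s.re) :
    (k : ℝ) ^ n * ‖c n k s‖ / (n.factorial : ℝ)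
      ≤ (∏ j ∈ Finset.range n, (‖s‖ + j)) / (n.factorial : ℝ) *
        ∑' m : ℕ, ((m : ℝ) + k) ^ (-s.re) :=
  stmt_2_general k n s hs
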